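/- Expansion of matrix powers in divided differences: for λ diagonal with entries λ_i, τ arbitrary, and p ≥ 0, [(λ+τ)^p]_{ip'} = λ_i^p δ_{ip'} + Σ_{n=1}^{p} Σ_{m_1,…,m_{n-1}} h_{p−n}(λ_i, λ_{m_1}, …, λ_{m_{n-1}}, λ_{p'}) · τ_{i m_1} ⋯ τ_{m_{n-1} p'}, where h_k is the complete homogeneous symmetric polynomial of degree k. -/

import Mathlib

/-!
Induct on `p`, using `(λ + τ)^(p+1) = λ (λ + τ)^p + τ (λ + τ)^p`. The `τ`-term prepends a step
`i → q` to every chain in the expansion of `(λ + τ)^p`, producing chains whose symmetric polynomial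
omits the first variable `λ_i`; the `λ`-term multiplies the expansion by `λ_i`. The recurrence
`h_{k+1}(x_0, …, x_n) = h_{k+1}(x_1, …, x_n) + x_0 h_k(x_0, …, x_n)` recombines the two into the
expansion of degree one higher.
-/

/-- Complete homogeneous symmetric polynomial `h_k` in the variables `x 0, …, x (m-1)`. -/
noncomputable def hsym {m : ℕ} (k : ℕ) (x : Fin m → ℂ) : ℂ :=
  ∑ a ∈ Finset.Nat.antidiagonalTuple m k, ∏ j : Fin m, x j ^ a j

/-- Confluent (Hermite) divided difference of a polynomial `f = Σ c_p z^p`: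
`f[x_0,…,x_n] = Σ_p c_p h_{p-n}(x_0,…,x_n)`, with the monomial term zero for `n > p`. -/
noncomputable def dd {n : ℕ} (f : Polynomial ℂ) (x : Fin (n + 1) → ℂ) : ℂ :=
  ∑ p ∈ f.support, f.coeff p * (if n ≤ p then hsym (p - n) x else 0)

/-- The index chain `i, m_1, …, m_n, p'`. -/
def chain {N n : ℕ} (i p : Fin N) (m : Fin n → Fin N) : Fin (n + 2) → Fin N :=
  Fin.cons i (Fin.snoc m p)

lemma hsym_zero {m : ℕ} (x : Fin m → ℂ) : hsym 0 x = 1 := by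
  simp [hsym, Finset.Nat.antidiagonalTuple_zero_right]

lemma hsym_fin_one (k : ℕ) (x : Fin 1 → ℂ) : hsym k x = x 0 ^ k := by
  simp [hsym]

lemma hsym_eq_sum_pow_mul_hsym_tail {m : ℕ} (k : ℕ) (x : Fin (m + 1) → ℂ) :
    hsym k x = ∑ j ∈ Finset.range (k + 1), x 0 ^ j * hsym (k - j) (Fin.tail x) := by
  simp_rw [hsym, Finset.mul_sum, Finset.sum_sigma']
  refine Finset.sum_nbij' (fun a => ⟨a 0, Fin.tail a⟩) (fun s => Fin.cons s.1 s.2)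
    ?_ ?_ (fun a _ => Fin.cons_self_tail a) (fun s _ => by simp) (fun a _ => Fin.prod_univ_succ _)
  · intro a ha
    simp only [Finset.Nat.mem_antidiagonalTuple, Fin.sum_univ_succ] at ha
    simp only [Finset.mem_sigma, Finset.mem_range, Finset.Nat.mem_antidiagonalTuple, Fin.tail]
    omega
  · rintro ⟨j, a⟩ hs
    simp only [Finset.mem_sigma, Finset.mem_range, Finset.Nat.mem_antidiagonalTuple] at hs
    simp only [Finset.Nat.mem_antidiagonalTuple, Fin.sum_univ_succ, Fin.cons_zero, Fin.cons_succ]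
    omega

lemma hsym_succ {m : ℕ} (k : ℕ) (x : Fin (m + 1) → ℂ) :
    hsym (k + 1) x = hsym (k + 1) (Fin.tail x) + x 0 * hsym k x := by
  rw [hsym_eq_sum_pow_mul_hsym_tail, hsym_eq_sum_pow_mul_hsym_tail k, Finset.sum_range_succ',
    Finset.mul_sum, add_comm]
  simp [pow_succ', mul_assoc]

lemma chain_zero {N n : ℕ} (a b : Fin N) (m : Fin n → Fin N) : chain a b m 0 = a := rfl

lemma chain_cons {N n : ℕ} (a b q : Fin N) (m : Fin n → Fin N) :
    chain a b (Fin.cons q m) = Fin.cons a (chain q b m) := by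
  rw [chain, chain, Fin.cons_snoc_eq_snoc_cons q m b]

def chainWeight {α R : Type*} [CommMonoid R] (τ : Matrix α α R) {n : ℕ} (c : Fin (n + 1) → α) :
    R :=
  ∏ j : Fin n, τ (c j.castSucc) (c j.succ)

lemma chainWeight_cons {α R : Type*} [CommMonoid R] (τ : Matrix α α R) {n : ℕ} (a : α)
    (c : Fin (n + 1) → α) :
    chainWeight τ (Fin.cons a c : Fin (n + 2) → α) = τ a (c 0) * chainWeight τ c := by
  simp only [chainWeight, Fin.prod_univ_succ, Fin.castSucc_zero, Fin.cons_zero,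
    ← Fin.succ_castSucc, Fin.cons_succ]

lemma Matrix.diagonal_add_pow_succ_apply {n R : Type*} [Fintype n] [DecidableEq n] [Semiring R]
    (d : n → R) (τ : Matrix n n R) (p : ℕ) (a b : n) :
    ((diagonal d + τ) ^ (p + 1)) a b =
      d a * ((diagonal d + τ) ^ p) a b + ∑ q, τ a q * ((diagonal d + τ) ^ p) q b := by
  rw [pow_succ', add_mul, add_apply, diagonal_mul, mul_apply]

section ChainSum

variable {N : ℕ} (l : Fin N → ℂ) (τ : Matrix (Fin N) (Fin N) ℂ)

noncomputable def chainSum (n k : ℕ) (a b : Fin N) : ℂ :=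
  ∑ m : Fin n → Fin N, hsym k (fun j => l (chain a b m j)) * chainWeight τ (chain a b m)

noncomputable def tailChainSum (n k : ℕ) (a b : Fin N) : ℂ :=
  ∑ m : Fin n → Fin N,
    hsym k (fun j => l ((Fin.snoc m b : Fin (n + 1) → Fin N) j)) * chainWeight τ (chain a b m)

lemma chainSum_zero_degree (n : ℕ) (a b : Fin N) :
    chainSum l τ n 0 a b = tailChainSum l τ n 0 a b := by
  simp only [chainSum, tailChainSum, hsym_zero]

lemma chainSum_succ_degree (n k : ℕ) (a b : Fin N) :
    chainSum l τ n (k + 1) a b = tailChainSum l τ n (k + 1) a b + l a * chainSum l τ n k a b := by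
  simp only [chainSum, tailChainSum, Finset.mul_sum, ← Finset.sum_add_distrib]
  refine Finset.sum_congr rfl fun m _ => ?_
  have htail : Fin.tail (fun j => l (chain a b m j)) =
      fun j => l ((Fin.snoc m b : Fin (n + 1) → Fin N) j) := rfl
  rw [hsym_succ, htail, chain_zero]
  ring

lemma tailChainSum_zero (k : ℕ) (a b : Fin N) : tailChainSum l τ 0 k a b = τ a b * l b ^ k := by
  simp [tailChainSum, chainWeight, hsym_fin_one, chain, Fin.snoc_zero, mul_comm]

lemma tailChainSum_succ (n k : ℕ) (a b : Fin N) :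
    tailChainSum l τ (n + 1) k a b = ∑ q, τ a q * chainSum l τ n k q b := by
  rw [tailChainSum, ← (Fin.consEquiv fun _ => Fin N).sum_comp, Fintype.sum_prod_type]
  refine Finset.sum_congr rfl fun q _ => ?_
  simp only [chainSum, Finset.mul_sum]
  refine Finset.sum_congr rfl fun m _ => ?_
  have hsnoc : Fin.snoc (Fin.cons q m) b = chain q b m := (Fin.cons_snoc_eq_snoc_cons q m b).symm
  rw [show (Fin.consEquiv fun _ => Fin N) (q, m) = Fin.cons q m from rfl, hsnoc, chain_cons,
    chainWeight_cons, chain_zero]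
  ring

noncomputable def chainSeries (p : ℕ) (a b : Fin N) : ℂ :=
  ∑ n ∈ Finset.range p, chainSum l τ n (p - (n + 1)) a b

lemma chainSeries_succ (p : ℕ) (a b : Fin N) :
    chainSeries l τ (p + 1) a b =
      τ a b * l b ^ p + ∑ q, τ a q * chainSeries l τ p q b + l a * chainSeries l τ p a b := by
  have hsplit : ∀ n ∈ Finset.range p, chainSum l τ n (p - n) a b =
      tailChainSum l τ n (p - n) a b + l a * chainSum l τ n (p - (n + 1)) a b := by
    intro n hn
    obtain ⟨k, hk, hk'⟩ : ∃ k, p - n = k + 1 ∧ p - (n + 1) = k :=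
      ⟨p - (n + 1), by rw [Finset.mem_range] at hn; omega, rfl⟩
    rw [hk, hk', chainSum_succ_degree]
  calc chainSeries l τ (p + 1) a b
      = ∑ n ∈ Finset.range p, chainSum l τ n (p - n) a b + chainSum l τ p 0 a b := by
        simp only [chainSeries, Finset.sum_range_succ, Nat.add_sub_add_right, Nat.sub_self]
    _ = ∑ n ∈ Finset.range (p + 1), tailChainSum l τ n (p - n) a b
          + l a * chainSeries l τ p a b := by
        rw [Finset.sum_congr rfl hsplit, Finset.sum_add_distrib, chainSum_zero_degree,
          Finset.sum_range_succ, Nat.sub_self, chainSeries, Finset.mul_sum]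
        ring
    _ = _ := by
        simp only [Finset.sum_range_succ', tailChainSum_succ, tailChainSum_zero, Nat.sub_zero,
          chainSeries, Finset.mul_sum]
        rw [Finset.sum_comm]
        ring

end ChainSum

theorem Matrix.diagonal_add_pow_apply {N : ℕ} (l : Fin N → ℂ) (τ : Matrix (Fin N) (Fin N) ℂ)
    (p : ℕ) (a b : Fin N) :
    ((diagonal l + τ) ^ p) a b = l a ^ p * (if a = b then 1 else 0) + chainSeries l τ p a b := by
  induction p generalizing a b with
  | zero => simp [chainSeries, one_apply]
  | succ p ih =>
    have hdiag : ∑ q, τ a q * (l q ^ p * (if q = b then 1 else 0)) = τ a b * l b ^ p := by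
      simp [mul_ite]
    simp only [diagonal_add_pow_succ_apply, chainSeries_succ, ih, mul_add, Finset.sum_add_distrib,
      hdiag]
    ring

theorem stmt17 (N : ℕ) (l : Fin N → ℂ) (τ : Matrix (Fin N) (Fin N) ℂ)
    (p : ℕ) (i p' : Fin N) :
    ((Matrix.diagonal l + τ) ^ p) i p' =
      l i ^ p * (if i = p' then 1 else 0)
      + ∑ n ∈ Finset.range p, ∑ m : Fin n → Fin N,
          hsym (p - (n + 1)) (fun j => l (chain i p' m j)) *
            ∏ j : Fin (n + 1), τ (chain i p' m j.castSucc) (chain i p' m j.succ) :=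
  Matrix.diagonal_add_pow_apply l τ p i p'
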